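/- Marginal kernel of a conditional DPP: let L be a symmetric positive semidefinite real matrix indexed by a finite set ι, let A ⊆ ι, and assume L + I_Ā is invertible. Define the matrix K^A indexed by ι \ A as K^A = I − [(L + I_Ā)^{-1}]_{ι\A}, where [(L + I_Ā)^{-1}]_{ι\A} is the principal submatrix of (L + I_Ā)^{-1} indexed by ι \ A. Then for every subset B ⊆ ι \ A, the sum over all B' with B ⊆ B' ⊆ ι \ A of det(L_{A ∪ B'}) equals det(L + I_Ā) · det(K^A_B); that is, the conditional inclusion probability P(B ⊆ Y | A ⊆ Y) equals det(K^A_B). -/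

import Mathlib

/-!
Put `N = L + I_Ā` and let `E` be the `ι × B` matrix of the inclusion `B ⊆ ι`, so that
`E Eᵀ = I_B`. The Weinstein–Aronszajn identity `det (1 - N⁻¹ E Eᵀ) = det (1 - Eᵀ N⁻¹ E)` gives
`det N · det K^A_B = det (N - I_B) = det (L + I_{(A ∪ B)ᶜ})`. Expanding this determinant
multilinearly in the rows, the term that takes the rows of `L` on `s` and the rows of the diagonal
elsewhere is `det L_s` when `A ∪ B ⊆ s` and vanishes otherwise (it has a zero row), and
`B' ↦ A ∪ B'` matches these `s` with the sets `B'` of the sum.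
-/

open Matrix BigOperators

/-- Principal submatrix of `L` whose rows and columns are indexed by the
elements of the finite subset `Y`. -/
def principalSub {ι : Type*} (L : Matrix ι ι ℝ) (Y : Finset ι) :
    Matrix Y Y ℝ :=
  L.submatrix (fun x => x.1) (fun x => x.1)

namespace Matrix
variable {n R : Type*} [Fintype n] [DecidableEq n] [CommRing R]

lemma det_add_diagonal_indicator_compl (M : Matrix n n R) (C : Finset n) :
    (M + diagonal fun i => if i ∈ C then 0 else 1).det
      = ∑ s ∈ Finset.univ.filter (C ⊆ ·), (M.submatrix ((↑) : s → n) (↑)).det := by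
  set D : Matrix n n R := diagonal fun i => if i ∈ C then 0 else 1
  have hexpand : (M + D).det = ∑ s : Finset n, det (of (s.piecewise M.row D.row)) :=
    (detRowAlternating : (n → R) [⋀^n]→ₗ[R] R).map_add_univ M.row D.row
  rw [hexpand, Finset.sum_filter]
  refine Finset.sum_congr rfl fun s _ => ?_
  split_ifs with hCs
  · rw [← det_piecewise_one_eq_submatrix_det]
    congr 2
    refine s.piecewise_congr (fun _ _ => rfl) fun i hi => ?_
    ext j
    simp [D, row, diagonal, one_apply, show i ∉ C from fun h => hi (hCs h)]
  · obtain ⟨i, hiC, his⟩ := Finset.not_subset.mp hCs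
    refine det_eq_zero_of_row_eq_zero i fun j => ?_
    rw [of_apply, Finset.piecewise_eq_of_notMem _ _ _ his]
    simp [D, row, diagonal, hiC]

lemma det_mul_det_one_sub_inv_submatrix (N : Matrix n n R) (hN : IsUnit N.det) (B : Finset n) :
    N.det * (1 - N⁻¹.submatrix ((↑) : B → n) (↑)).det
      = (N - diagonal fun i => if i ∈ B then 1 else 0).det := by
  set E : Matrix n B R := (1 : Matrix n n R).submatrix id (↑)
  have hEE : E * Eᵀ = diagonal fun i => if i ∈ B then 1 else 0 := by
    ext i j
    simp only [E, mul_apply, transpose_apply, submatrix_apply, id, one_apply, diagonal_apply]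
    rw [Finset.sum_coe_sort B (fun k => (if i = k then (1 : R) else 0) * if j = k then 1 else 0)]
    simp only [ite_mul, one_mul, zero_mul, Finset.sum_ite_eq]
    grind
  have hEN : Eᵀ * (N⁻¹ * E) = N⁻¹.submatrix ((↑) : B → n) (↑) := by
    ext i j
    simp [E, mul_apply, one_apply]
  calc N.det * (1 - N⁻¹.submatrix ((↑) : B → n) (↑)).det
      = N.det * (1 - N⁻¹ * E * Eᵀ).det := by rw [← hEN, ← det_one_sub_mul_comm, Matrix.mul_assoc]
    _ = (N - E * Eᵀ).det := by
      rw [← det_mul, Matrix.mul_sub, Matrix.mul_one, ← Matrix.mul_assoc, ← Matrix.mul_assoc,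
        mul_nonsing_inv N hN, Matrix.one_mul]
    _ = _ := by rw [hEE]

end Matrix

namespace Finset
variable {ι M : Type*} [Fintype ι] [DecidableEq ι] [AddCommMonoid M]

lemma sum_powerset_compl_union_eq_sum_superset (f : Finset ι → M) {A B : Finset ι}
    (hB : B ⊆ Aᶜ) :
    ∑ B' ∈ Aᶜ.powerset.filter (B ⊆ ·), f (A ∪ B') = ∑ s ∈ univ.filter (A ∪ B ⊆ ·), f s :=
  sum_nbij' (A ∪ ·) (· \ A) (by grind [mem_compl]) (by grind [mem_compl])
    (by grind [mem_compl]) (by grind [mem_compl]) fun _ _ => rfl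

end Finset

theorem conditional_dpp_marginal_kernel_general {ι : Type*} [Fintype ι] [DecidableEq ι]
    (L : Matrix ι ι ℝ) (A : Finset ι)
    (IAbar : Matrix ι ι ℝ)
    (hIAbar : IAbar = Matrix.diagonal fun i => if i ∈ A then (0 : ℝ) else 1)
    (hinv : IsUnit (L + IAbar).det)
    (KA : Matrix (Aᶜ : Finset ι) (Aᶜ : Finset ι) ℝ)
    (hKA : KA = 1 - ((L + IAbar)⁻¹).submatrix (fun x => x.1) (fun x => x.1))
    (B : Finset ι) (hB : B ⊆ Aᶜ) :
    ∑ B' ∈ (Aᶜ : Finset ι).powerset.filter (fun B' => B ⊆ B'),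
        (principalSub L (A ∪ B')).det
      = (L + IAbar).det *
        (KA.submatrix (fun b : B => (⟨b.1, hB b.2⟩ : (Aᶜ : Finset ι)))
          (fun b : B => (⟨b.1, hB b.2⟩ : (Aᶜ : Finset ι)))).det := by
  set N := L + IAbar
  have hKAB : KA.submatrix (fun b : B => (⟨b.1, hB b.2⟩ : (Aᶜ : Finset ι)))
      (fun b : B => ⟨b.1, hB b.2⟩) = 1 - N⁻¹.submatrix ((↑) : B → ι) (↑) := by
    ext i j
    simp only [hKA, submatrix_apply, Matrix.sub_apply, one_apply, Subtype.ext_iff]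
  have hdiag : N - diagonal (fun i => if i ∈ B then 1 else 0)
      = L + diagonal fun i => if i ∈ A ∪ B then 0 else 1 := by
    rw [add_sub_assoc, hIAbar, diagonal_sub]
    congr 2 with i
    grind [Finset.mem_compl]
  rw [hKAB, det_mul_det_one_sub_inv_submatrix N hinv B, hdiag, det_add_diagonal_indicator_compl,
    ← Finset.sum_powerset_compl_union_eq_sum_superset _ hB]
  rfl

/-- Marginal kernel of a conditional DPP: with `L` symmetric positive
semidefinite, `A ⊆ ι`, `L + I_Ā` invertible, and
`K^A = I − [(L + I_Ā)⁻¹]_{ι\A}` (a matrix indexed by `ι \ A`), for every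
`B ⊆ ι \ A` the sum over all `B'` with `B ⊆ B' ⊆ ι \ A` of `det(L_{A ∪ B'})`
equals `det(L + I_Ā) · det(K^A_B)`; i.e. the conditional inclusion probability
`P(B ⊆ Y | A ⊆ Y)` equals `det(K^A_B)`. -/
theorem conditional_dpp_marginal_kernel {ι : Type*} [Fintype ι] [DecidableEq ι]
    (L : Matrix ι ι ℝ) (hL : L.PosSemidef) (A : Finset ι)
    (IAbar : Matrix ι ι ℝ)
    (hIAbar : IAbar = Matrix.diagonal fun i => if i ∈ A then (0 : ℝ) else 1)
    (hinv : IsUnit (L + IAbar).det)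
    (KA : Matrix (Aᶜ : Finset ι) (Aᶜ : Finset ι) ℝ)
    (hKA : KA = 1 - ((L + IAbar)⁻¹).submatrix (fun x => x.1) (fun x => x.1))
    (B : Finset ι) (hB : B ⊆ Aᶜ) :
    ∑ B' ∈ (Aᶜ : Finset ι).powerset.filter (fun B' => B ⊆ B'),
        (principalSub L (A ∪ B')).det
      = (L + IAbar).det *
        (KA.submatrix (fun b : B => (⟨b.1, hB b.2⟩ : (Aᶜ : Finset ι)))
          (fun b : B => (⟨b.1, hB b.2⟩ : (Aᶜ : Finset ι)))).det :=
  conditional_dpp_marginal_kernel_general L A IAbar hIAbar hinv KA hKA B hB
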